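/- Let X be a Banach space and f : X → ℝ ∪ {+∞} proper, convex, lower semicontinuous, and bounded below. Suppose there exists a > 0 such that every subgradient p ∈ ∂f(x) (for any x) satisfies ‖p‖ ≥ a‖x‖. Then f attains its global minimum at 0. -/

import Mathlib

/-!
Suppose `f x < f 0`. By lower semicontinuity `f x < f` on a ball `B(0, δ)`. Ekeland's variational
principle with slope `κ = a δ / 2`, started at `x`, gives `y` with `f y ≤ f x` that minimizes
`f + κ ‖· - y‖`. The convex sets `{(z, s) | f z ≤ f y - s}` and `{(z, s) | κ ‖z - y‖ < s}` are then
disjoint, and a separating hyperplane, necessarily non-vertical, yields `p ∈ ∂f(y)` with `‖p‖ ≤ κ`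
(the Brøndsted–Rockafellar step). So `a ‖y‖ ≤ ‖p‖ ≤ a δ / 2`, i.e. `y ∈ B(0, δ)`, contradicting
`f y ≤ f x`.
-/

open Set

variable {X : Type*} [NormedAddCommGroup X] [NormedSpace ℝ X] [CompleteSpace X]

/-- The convex subdifferential of an extended-real-valued function. -/
def Subdiff (f : X → EReal) (x : X) : Set (X →L[ℝ] ℝ) :=
  {p | ∀ y : X, f x + ((p (y - x) : ℝ) : EReal) ≤ f y}

/-- The ε-subdifferential. -/
def EpsSubdiff (f : X → EReal) (ε : ℝ) (x : X) : Set (X →L[ℝ] ℝ) :=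
  {p | ∀ y : X, f x + ((p (y - x) - ε : ℝ) : EReal) ≤ f y}

/-- f is proper: never -∞ and not identically +∞. -/
def EProper (f : X → EReal) : Prop := (∃ x, f x ≠ ⊤) ∧ ∀ x, f x ≠ ⊥

/-- Convexity of an extended-real-valued function. -/
def EConvex (f : X → EReal) : Prop :=
  ∀ x y : X, ∀ t : ℝ, 0 ≤ t → t ≤ 1 →
    f (t • x + (1 - t) • y) ≤ ((t : ℝ) : EReal) * f x + (((1 - t : ℝ)) : EReal) * f y

open Filter Topology

section Ekeland

variable {α : Type*}

theorem exists_mem_forall_le_add {F : α → ℝ} {s : Set α} (hs : s.Nonempty) (hF : BddBelow (F '' s))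
    {ε : ℝ} (hε : 0 < ε) : ∃ x ∈ s, ∀ z ∈ s, F x ≤ F z + ε := by
  obtain ⟨_, ⟨x, hx, rfl⟩, hlt⟩ :=
    exists_lt_of_csInf_lt (hs.image F) (lt_add_of_pos_right (sInf (F '' s)) hε)
  exact ⟨x, hx, fun z hz => by linarith [csInf_le hF (mem_image_of_mem F hz)]⟩

variable [PseudoMetricSpace α] {F : α → ℝ} {κ : ℝ} {x y z : α}

def ekelandSet (F : α → ℝ) (κ : ℝ) (x : α) : Set α :=
  {z | F z + κ * dist z x ≤ F x}

theorem self_mem_ekelandSet : x ∈ ekelandSet F κ x := by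
  simp [ekelandSet]

theorem le_of_mem_ekelandSet (hκ : 0 ≤ κ) (hz : z ∈ ekelandSet F κ x) : F z ≤ F x := by
  have := mul_nonneg hκ (dist_nonneg (x := z) (y := x))
  simp only [ekelandSet, mem_ofPred_eq] at hz
  linarith

theorem ekelandSet_subset (hκ : 0 ≤ κ) (hy : y ∈ ekelandSet F κ x) :
    ekelandSet F κ y ⊆ ekelandSet F κ x := fun z hz => by
  have := mul_le_mul_of_nonneg_left (dist_triangle z y x) hκ
  simp only [ekelandSet, mem_ofPred_eq] at hy hz ⊢
  linarith

theorem isClosed_ekelandSet (hF : LowerSemicontinuous F) : IsClosed (ekelandSet F κ x) :=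
  (hF.add (by fun_prop : Continuous fun z => κ * dist z x).lowerSemicontinuous).isClosed_preimage _

theorem LowerSemicontinuous.exists_le_forall_le_add_mul_dist [CompleteSpace α]
    (hF : LowerSemicontinuous F) (hbdd : BddBelow (range F)) (hκ : 0 < κ) (x₀ : α) :
    ∃ y, F y ≤ F x₀ ∧ ∀ z, F y ≤ F z + κ * dist z y := by
  have step (n : ℕ) (x : α) :
      ∃ x' ∈ ekelandSet F κ x, ∀ z ∈ ekelandSet F κ x, F x' ≤ F z + (1 / 2) ^ n :=
    exists_mem_forall_le_add ⟨x, self_mem_ekelandSet⟩ (hbdd.mono (image_subset_range _ _))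
      (by positivity)
  choose next hnext_mem hnext_le using step
  let x : ℕ → α := fun n => Nat.rec x₀ next n
  have hanti : Antitone fun n => ekelandSet F κ (x n) :=
    antitone_nat_of_succ_le fun n => ekelandSet_subset hκ.le (hnext_mem n (x n))
  have hsmall (n : ℕ) : ∀ z ∈ ekelandSet F κ (x (n + 1)), κ * dist z (x (n + 1)) ≤ (1 / 2) ^ n := by
    intro z hz
    have : F (x (n + 1)) ≤ F z + (1 / 2) ^ n := hnext_le n (x n) z (hanti n.le_succ hz)
    simp only [ekelandSet, mem_ofPred_eq] at hz
    linarith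
  have hcauchy : CauchySeq fun n => x (n + 1) := by
    refine cauchySeq_of_le_tendsto_0' (fun n => (1 / 2) ^ n / κ) (fun n m hnm => ?_) ?_
    · rw [dist_comm, le_div_iff₀' hκ]
      exact hsmall n _ (hanti (by omega : n + 1 ≤ m + 1) self_mem_ekelandSet)
    · simpa using (tendsto_pow_atTop_nhds_zero_of_lt_one (r := (1 / 2 : ℝ)) (by norm_num)
        (by norm_num)).div_const κ
  obtain ⟨y, hy⟩ := cauchySeq_tendsto_of_complete hcauchy
  have hyS (n : ℕ) : y ∈ ekelandSet F κ (x n) :=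
    (isClosed_ekelandSet hF).mem_of_tendsto hy
      (eventually_atTop.2 ⟨n, fun m hm => hanti (by omega : n ≤ m + 1) self_mem_ekelandSet⟩)
  refine ⟨y, le_of_mem_ekelandSet hκ.le (hyS 0), fun z => ?_⟩
  by_contra! hz
  have hzS (n : ℕ) : z ∈ ekelandSet F κ (x n) := ekelandSet_subset hκ.le (hyS n) hz.le
  have hyz : F y ≤ F z := ge_of_tendsto'
    (by simpa using tendsto_const_nhds.add (tendsto_pow_atTop_nhds_zero_of_lt_one
      (r := (1 / 2 : ℝ)) (by norm_num) (by norm_num)))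
    fun n => (le_of_mem_ekelandSet hκ.le (hyS (n + 1))).trans (hnext_le n (x n) z (hzS n))
  nlinarith [dist_nonneg (x := z) (y := y)]

theorem EReal.coe_toReal_min {a : EReal} {m : ℝ} (ha : (m : EReal) ≤ a) (c : ℝ) :
    (((min a c).toReal : ℝ) : EReal) = min a c := by
  refine EReal.coe_toReal (ne_top_of_le_ne_top (EReal.coe_ne_top c) (min_le_right _ _)) ?_
  exact ne_bot_of_le_ne_bot (by simp) (min_le_min_right (c : EReal) ha)

theorem LowerSemicontinuous.exists_le_forall_le_add_mul_dist_of_ne_top [CompleteSpace α]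
    {f : α → EReal} (hf : LowerSemicontinuous f) (hbdd : ∃ m : ℝ, ∀ x, (m : EReal) ≤ f x)
    (hκ : 0 < κ) {x₀ : α} (hx₀ : f x₀ ≠ ⊤) :
    ∃ y, f y ≤ f x₀ ∧ ∀ z, f y ≤ f z + ((κ * dist z y : ℝ) : EReal) := by
  obtain ⟨m, hm⟩ := hbdd
  obtain ⟨c, hc, -⟩ := EReal.exists_between_coe_real hx₀.lt_top
  set F : α → ℝ := fun x => (min (f x) c).toReal
  have hF (x : α) : (F x : EReal) = min (f x) c := EReal.coe_toReal_min (hm x) c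
  have hF_lsc : LowerSemicontinuous F := by
    have hc_lsc : LowerSemicontinuous fun _ : α => (c : EReal) := lowerSemicontinuous_const
    have : LowerSemicontinuous fun x => (F x : EReal) := by simpa only [hF] using hf.inf hc_lsc
    exact fun x r hr => (this x r (EReal.coe_lt_coe_iff.2 hr)).mono
      fun _ => EReal.coe_lt_coe_iff.1
  have hF_bdd : BddBelow (range F) := ⟨min m c, by
    rintro _ ⟨x, rfl⟩
    rw [← EReal.coe_le_coe_iff, hF]
    exact le_min ((EReal.coe_le_coe_iff.2 (min_le_left m c)).trans (hm x))
      (EReal.coe_le_coe_iff.2 (min_le_right m c))⟩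
  obtain ⟨y, hyx, hy⟩ := hF_lsc.exists_le_forall_le_add_mul_dist hF_bdd hκ x₀
  have hFx₀ : (F x₀ : EReal) = f x₀ := by rw [hF, min_eq_left hc.le]
  -- the truncation is inactive at `y`, since `F y ≤ F x₀ < c`
  have hFy : (F y : EReal) = f y := by
    have : min (f y) c < c := by
      rw [← hF]; exact (EReal.coe_le_coe_iff.2 hyx).trans_lt (hFx₀ ▸ hc)
    rw [hF, min_eq_left ((min_lt_iff.1 this).resolve_right (lt_irrefl _)).le]
  refine ⟨y, hFy ▸ hFx₀ ▸ EReal.coe_le_coe_iff.2 hyx, fun z => ?_⟩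
  calc f y = F y := hFy.symm
    _ ≤ ((F z + κ * dist z y : ℝ) : EReal) := EReal.coe_le_coe_iff.2 (hy z)
    _ ≤ f z + ((κ * dist z y : ℝ) : EReal) := by
        rw [EReal.coe_add, hF]
        gcongr
        exact min_le_left _ _

end Ekeland

section Subdifferential

variable {E : Type*} [NormedAddCommGroup E] [NormedSpace ℝ E] {f : E → EReal}

theorem EConvex.apply_le (hf : EConvex f) {x₁ x₂ : E} {r₁ r₂ t : ℝ} (h₁ : f x₁ ≤ r₁)
    (h₂ : f x₂ ≤ r₂) (ht₀ : 0 ≤ t) (ht₁ : t ≤ 1) :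
    f (t • x₁ + (1 - t) • x₂) ≤ ((t * r₁ + (1 - t) * r₂ : ℝ) : EReal) :=
  calc f (t • x₁ + (1 - t) • x₂) ≤ (t : EReal) * f x₁ + ((1 - t : ℝ) : EReal) * f x₂ :=
        hf x₁ x₂ t ht₀ ht₁
    _ ≤ (t : EReal) * r₁ + ((1 - t : ℝ) : EReal) * r₂ := by gcongr
    _ = _ := by norm_cast

theorem EConvex.convex_setOf_le (hf : EConvex f) (c : ℝ) :
    Convex ℝ {q : E × ℝ | f q.1 ≤ ((c - q.2 : ℝ) : EReal)} := by
  rintro ⟨z₁, s₁⟩ h₁ ⟨z₂, s₂⟩ h₂ a b ha hb hab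
  obtain rfl : b = 1 - a := by linarith
  have := hf.apply_le h₁ h₂ ha (by linarith)
  simp only [mem_ofPred_eq, Prod.smul_mk, Prod.mk_add_mk, smul_eq_mul] at this ⊢
  convert this using 2
  ring

theorem convex_setOf_mul_norm_sub_lt (κ : ℝ) (hκ : 0 ≤ κ) (y : E) :
    Convex ℝ {q : E × ℝ | κ * ‖q.1 - y‖ < q.2} := by
  have : ConvexOn ℝ univ fun z : E => κ * ‖z - y‖ := by
    simpa [Function.comp_def, neg_add_eq_sub] using
      ((convexOn_norm convex_univ).translate_right (-y)).smul hκ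
  simpa using this.convex_strict_epigraph

theorem ContinuousLinearMap.norm_le_of_forall_apply_le {ψ : E →L[ℝ] ℝ} {κ : ℝ} (hκ : 0 ≤ κ)
    (h : ∀ v, ψ v ≤ κ * ‖v‖) : ‖ψ‖ ≤ κ :=
  ψ.opNorm_le_bound hκ fun v => by
    have := h (-v)
    rw [map_neg, norm_neg] at this
    rw [Real.norm_eq_abs, abs_le]
    constructor <;> linarith [h v]

theorem EConvex.exists_affine_minorant_of_forall_le_add_mul_norm (hf : EConvex f) {y : E} {c κ : ℝ}
    (hκ : 0 ≤ κ) (hfy : f y = c) (hmin : ∀ z, f y ≤ f z + ((κ * ‖z - y‖ : ℝ) : EReal)) :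
    ∃ ψ : E →L[ℝ] ℝ, (∀ v, ψ v ≤ κ * ‖v‖) ∧ ∀ z, ∀ r : ℝ, f z ≤ r → c - ψ (z - y) ≤ r := by
  have hdisj : Disjoint {q : E × ℝ | κ * ‖q.1 - y‖ < q.2}
      {q : E × ℝ | f q.1 ≤ ((c - q.2 : ℝ) : EReal)} := by
    refine disjoint_left.2 fun q hU hE => ?_
    have : (c : EReal) ≤ ((c - q.2 + κ * ‖q.1 - y‖ : ℝ) : EReal) :=
      hfy ▸ (hmin q.1).trans (by rw [EReal.coe_add]; gcongr; exact hE)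
    simp only [mem_ofPred_eq, EReal.coe_le_coe_iff] at hU this
    linarith
  obtain ⟨L, u, hLU, hLE⟩ := geometric_hahn_banach_open (convex_setOf_mul_norm_sub_lt κ hκ y)
    (isOpen_lt (by fun_prop) continuous_snd) (hf.convex_setOf_le c) hdisj
  set φ := L.comp (ContinuousLinearMap.inl ℝ E ℝ)
  set μ := -L (0, 1)
  have hL (z : E) (s : ℝ) : L (z, s) = φ z - s * μ := by
    rw [show (z, s) = (z, 0) + s • ((0 : E), (1 : ℝ)) by simp, map_add, map_smul]
    simp [φ, μ]
  have hU (z : E) (s : ℝ) (hs : κ * ‖z - y‖ < s) : φ z - s * μ < u := hL z s ▸ hLU (z, s) hs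
  have hE (z : E) (s : ℝ) (hs : f z ≤ ((c - s : ℝ) : EReal)) : u ≤ φ z - s * μ :=
    hL z s ▸ hLE (z, s) hs
  have huy : u ≤ φ y := by simpa using hE y 0 (by simp [hfy])
  -- the separating hyperplane is not vertical
  have hμ : 0 < μ := by linarith [hU y 1 (by simp)]
  have hyu : φ y ≤ u := le_of_forall_pos_lt_add fun ε hε => by
    have := hU y (ε / μ) (by simpa using div_pos hε hμ)
    rw [div_mul_cancel₀ _ hμ.ne'] at this
    linarith
  refine ⟨μ⁻¹ • φ, fun v => ?_, fun z r hz => ?_⟩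
  · refine le_of_forall_gt_imp_ge_of_dense fun s hs => ?_
    have := hU (y + v) s (by simpa using hs)
    rw [map_add] at this
    rw [smul_apply, smul_eq_mul, inv_mul_le_iff₀ hμ]
    linarith
  · have := hE z (c - r) (by simpa using hz)
    rw [smul_apply, smul_eq_mul, map_sub, sub_le_comm, le_inv_mul_iff₀ hμ]
    linarith

theorem EConvex.exists_mem_subdiff_norm_le (hf : EConvex f) {y : E} {κ : ℝ} (hκ : 0 ≤ κ)
    (hmin : ∀ z, f y ≤ f z + ((κ * ‖z - y‖ : ℝ) : EReal)) : ∃ p ∈ Subdiff f y, ‖p‖ ≤ κ := by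
  induction hfy : f y using EReal.rec with
  | bot => exact ⟨0, fun z => by simp [hfy], by simpa using hκ⟩
  | top =>
    refine ⟨0, fun z => ?_, by simpa using hκ⟩
    have hz : f z = ⊤ := by
      by_contra hz
      exact EReal.add_ne_top hz (EReal.coe_ne_top _) (top_le_iff.1 (hfy ▸ hmin z))
    simp [hfy, hz]
  | coe c =>
    obtain ⟨ψ, hψ_le, hψ_minor⟩ :=
      hf.exists_affine_minorant_of_forall_le_add_mul_norm hκ hfy hmin
    refine ⟨-ψ, fun z => ?_, by simpa using ψ.norm_le_of_forall_apply_le hκ hψ_le⟩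
    induction hfz : f z using EReal.rec with
    | bot => simpa [hfy, hfz] using hmin z
    | top => exact le_top
    | coe r =>
      rw [hfy, ← EReal.coe_add, EReal.coe_le_coe_iff, neg_apply, ← sub_eq_add_neg]
      exact hψ_minor z r hfz.le

end Subdifferential

theorem stmt6_general (f : X → EReal) (hconv : EConvex f)
    (hlsc : LowerSemicontinuous f)
    (hbdd : ∃ m : ℝ, ∀ x : X, (m : EReal) ≤ f x)
    (h : ∃ a : ℝ, 0 < a ∧ ∀ x : X, ∀ p ∈ Subdiff f x, a * ‖x‖ ≤ ‖p‖) :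
    ∀ x : X, f 0 ≤ f x := by
  obtain ⟨a, ha, hsub⟩ := h
  intro x
  by_contra! hx
  obtain ⟨δ, hδ, hball⟩ := Metric.eventually_nhds_iff_ball.1 (hlsc 0 (f x) hx)
  obtain ⟨y, hyx, hy⟩ := hlsc.exists_le_forall_le_add_mul_dist_of_ne_top hbdd
    (κ := a * δ / 2) (by positivity) hx.ne_top
  obtain ⟨p, hp, hpκ⟩ := hconv.exists_mem_subdiff_norm_le (κ := a * δ / 2) (by positivity)
    fun z => by rw [← dist_eq_norm]; exact hy z
  have hy_small : ‖y‖ < δ := by nlinarith [hsub y p hp]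
  exact (hball y (mem_ball_zero_iff.2 hy_small)).not_ge hyx

theorem stmt6 (f : X → EReal) (hproper : EProper f) (hconv : EConvex f)
    (hlsc : LowerSemicontinuous f)
    (hbdd : ∃ m : ℝ, ∀ x : X, (m : EReal) ≤ f x)
    (h : ∃ a : ℝ, 0 < a ∧ ∀ x : X, ∀ p ∈ Subdiff f x, a * ‖x‖ ≤ ‖p‖) :
    ∀ x : X, f 0 ≤ f x :=
  stmt6_general f hconv hlsc hbdd h
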